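/- arXiv:2401.11191 — 7 statements merged into one kernel-verified Lean document; each statement's English description precedes it below -/
import Mathlib

section
/- For every real constant c > 0 there exist real numbers k₃, k₄, k₅ such that both the 3×3 matrix Y(k₃,k₄,k₅,c) and the 3×3 matrix Z(k₃,k₄,k₅) are (symmetric) positive definite. -/
/-!
Take `k₅ = c`, `k₃ = 4(1 + c)` and `k₄ = 5(1 + c)²`. Every leading principal minor of `Y` and
of `Z` is then a polynomial in `c` with positive coefficients, so both matrices are positive
definite by Sylvester's criterion.
-/

open Matrix

noncomputable def Ymat (k3 k4 k5 c : ℝ) : Matrix (Fin 3) (Fin 3) ℝ :=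
  !![2*k3^2 - 2*k4 - k5^2, k3*k4 - k3*k5^2,            -(k3*k5);
     k3*k4 - k3*k5^2,      2*k4^2 - 2*k3*k5 - k3^2*k5^2, -(k4*k5);
     -(k3*k5),             -(k4*k5),                     2*k5^2 - c^2]

noncomputable def Zmat (k3 k4 k5 : ℝ) : Matrix (Fin 3) (Fin 3) ℝ :=
  !![k3,  k4,        -k5;
     k4,  k3*k4 - k5, -(k3*k5);
     -k5, -(k3*k5),   k4*k5]

theorem quadratic_form_fin_three_pos {a b c d e f x y z : ℝ} (h₁ : 0 < a)
    (h₂ : 0 < a * d - b ^ 2)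
    (h₃ : 0 < a * d * f - a * e * e - b * b * f + b * e * c + c * b * e - c * d * c)
    (hxyz : x ≠ 0 ∨ y ≠ 0 ∨ z ≠ 0) :
    0 < x * (a * x + b * y + c * z) + y * (b * x + d * y + e * z) +
      z * (c * x + e * y + f * z) := by
  set Δ₂ := a * d - b ^ 2
  set Δ₃ := a * d * f - a * e * e - b * b * f + b * e * c + c * b * e - c * d * c
  -- completing the square twice (the `LDLᵀ` decomposition)
  have hsq : a * Δ₂ *
      (x * (a * x + b * y + c * z) + y * (b * x + d * y + e * z) + z * (c * x + e * y + f * z)) =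
      Δ₂ * (a * x + b * y + c * z) ^ 2 + (Δ₂ * y + (a * e - b * c) * z) ^ 2 +
        a * Δ₃ * z ^ 2 := by
    ring
  by_contra! hle
  have hneg := mul_nonpos_of_nonneg_of_nonpos (by positivity : 0 ≤ a * Δ₂) hle
  rw [hsq] at hneg
  have hU : 0 ≤ Δ₂ * (a * x + b * y + c * z) ^ 2 := by positivity
  have hW := sq_nonneg (Δ₂ * y + (a * e - b * c) * z)
  have hZ : 0 ≤ a * Δ₃ * z ^ 2 := by positivity
  obtain rfl : z = 0 := by
    simpa [(mul_pos h₁ h₃).ne'] using (by linarith : a * Δ₃ * z ^ 2 = 0)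
  obtain rfl : y = 0 := by
    simpa [h₂.ne'] using (by linarith : (Δ₂ * y + (a * e - b * c) * 0) ^ 2 = 0)
  obtain rfl : x = 0 := by
    simpa [h₁.ne', h₂.ne'] using (by linarith : Δ₂ * (a * x + b * 0 + c * 0) ^ 2 = 0)
  simp at hxyz

theorem Matrix.posDef_fin_three_of_leading_minors_pos {a b c d e f : ℝ} (h₁ : 0 < a)
    (h₂ : 0 < a * d - b ^ 2) (h₃ : 0 < !![a, b, c; b, d, e; c, e, f].det) :
    !![a, b, c; b, d, e; c, e, f].PosDef := by
  simp only [det_fin_three, of_apply, cons_val', cons_val_zero, cons_val_fin_one, cons_val_one,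
    cons_val] at h₃
  refine PosDef.of_dotProduct_mulVec_pos ?_ fun v hv ↦ ?_
  · ext i j
    fin_cases i <;> fin_cases j <;> rfl
  have hv' : v 0 ≠ 0 ∨ v 1 ≠ 0 ∨ v 2 ≠ 0 := by
    contrapose! hv
    exact funext fun i ↦ by fin_cases i <;> simp [hv]
  simpa [dotProduct, mulVec, Fin.sum_univ_three] using
    quadratic_form_fin_three_pos h₁ h₂ h₃ hv'

/-- For every real constant `c > 0` there exist `k₃, k₄, k₅` such that both
`Y(k₃,k₄,k₅,c)` and `Z(k₃,k₄,k₅)` are positive definite. -/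
theorem stmt0 (c : ℝ) (hc : 0 < c) :
    ∃ k3 k4 k5 : ℝ, (Ymat k3 k4 k5 c).PosDef ∧ (Zmat k3 k4 k5).PosDef := by
  refine ⟨4 * (1 + c), 5 * (1 + c) ^ 2, c, ?_, ?_⟩ <;>
    refine posDef_fin_three_of_leading_minors_pos ?_ ?_ ?_ <;>
    simp -failIfUnchanged only [det_fin_three, of_apply, cons_val', cons_val_zero,
      cons_val_fin_one, cons_val_one, cons_val] <;>
    ring_nf <;> positivity
end

section
/- If real numbers k₃,k₄,k₅ and c > 0 satisfy k₅ > c, k₃² − 2k₄ − 2k₅² > 0, and k₄² − 2k₃k₅ − 2k₃²k₅² > 0, then the matrix Y(k₃,k₄,k₅,c) is positive definite. -/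
/-! The quadratic form of `Y` splits as `(k₃a + k₄b − k₅d)² + k₅²(a − k₃b)²` plus a diagonal
form whose coefficients are `k₃² − 2k₄ − 2k₅²`, `k₄² − 2k₃k₅ − 2k₃²k₅²` and `k₅² − c²`, all
positive; so `Y` is a Gram matrix (positive semidefinite) plus a positive diagonal matrix. -/

open Matrix

theorem Ymat_eq_gram_add_diagonal (k3 k4 k5 c : ℝ) :
    Ymat k3 k4 k5 c =
      (!![k3, k4, -k5; k5, -(k3*k5), 0])ᴴ * !![k3, k4, -k5; k5, -(k3*k5), 0] +
        diagonal ![k3^2 - 2*k4 - 2*k5^2, k4^2 - 2*k3*k5 - 2*k3^2*k5^2, k5^2 - c^2] := by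
  ext i j
  fin_cases i <;> fin_cases j <;>
    simp [Ymat, Matrix.mul_apply, Fin.sum_univ_two] <;> ring

/-- If `c > 0`, `k₅ > c`, `k₃² − 2k₄ − 2k₅² > 0` and `k₄² − 2k₃k₅ − 2k₃²k₅² > 0`,
then `Y(k₃,k₄,k₅,c)` is positive definite. -/
theorem stmt2 (k3 k4 k5 c : ℝ) (hc : 0 < c) (h1 : k5 > c)
    (h2 : k3^2 - 2*k4 - 2*k5^2 > 0) (h3 : k4^2 - 2*k3*k5 - 2*k3^2*k5^2 > 0) :
    (Ymat k3 k4 k5 c).PosDef := by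
  have h5 : 0 < k5^2 - c^2 := by nlinarith
  rw [Ymat_eq_gram_add_diagonal]
  refine PosDef.posSemidef_add (posSemidef_conjTranspose_mul_self _) (posDef_diagonal_iff.2 ?_)
  intro i
  fin_cases i
  exacts [h2, h3, h5]
end

section
/- If real numbers k₃,k₄,k₅ satisfy k₃ > 0, k₅ > 0, k₃²k₄ − k₃k₅ − k₄² > 0, and k₃²k₄² − k₃³k₅ − k₄³ > 0, then the matrix Z(k₃,k₄,k₅) is positive definite. -/
/-!
Gaussian elimination factors `Z = Uᴴ D U` with `U` unit upper triangular and `D` diagonal.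
The pivots are the ratios of consecutive leading principal minors of `Z`, namely
`k₃`, `k₃²k₄ − k₃k₅ − k₄²` and `det Z = k₅ (k₃²k₄² − k₃³k₅ − k₄³ + k₅²)`, which the hypotheses
make positive; a positive diagonal matrix conjugated by an invertible one is positive definite.
-/

open Matrix

namespace Zmat

noncomputable def unitriangular (k3 k4 k5 : ℝ) : Matrix (Fin 3) (Fin 3) ℝ :=
  !![1, k4 / k3, -k5 / k3;
     0, 1,       k5 * (k4 - k3^2) / (k3^2*k4 - k3*k5 - k4^2);
     0, 0,       1]

noncomputable def pivots (k3 k4 k5 : ℝ) : Fin 3 → ℝ :=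
  ![k3, (k3^2*k4 - k3*k5 - k4^2) / k3,
    k5 * (k3^2*k4^2 - k3^3*k5 - k4^3 + k5^2) / (k3^2*k4 - k3*k5 - k4^2)]

lemma isUnit_unitriangular (k3 k4 k5 : ℝ) : IsUnit (unitriangular k3 k4 k5) := by
  simp [isUnit_iff_isUnit_det, unitriangular, det_fin_three]

lemma pivots_pos {k3 k4 k5 : ℝ} (h1 : 0 < k3) (h2 : 0 < k5)
    (hminor : 0 < k3^2*k4 - k3*k5 - k4^2) (hdet : 0 < k3^2*k4^2 - k3^3*k5 - k4^3) :
    ∀ i, 0 < pivots k3 k4 k5 i := by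
  have hdet' : 0 < k3^2*k4^2 - k3^3*k5 - k4^3 + k5^2 := by positivity
  intro i
  fin_cases i
  · exact h1
  · exact div_pos hminor h1
  · exact div_pos (mul_pos h2 hdet') hminor

lemma eq_conjTranspose_mul_diagonal_mul {k3 k4 k5 : ℝ} (h1 : k3 ≠ 0)
    (hminor : k3^2*k4 - k3*k5 - k4^2 ≠ 0) :
    Zmat k3 k4 k5 = (unitriangular k3 k4 k5)ᴴ * diagonal (pivots k3 k4 k5) *
      unitriangular k3 k4 k5 := by
  simp only [Zmat, unitriangular, pivots]
  generalize hA : k3^2*k4 - k3*k5 - k4^2 = A at hminor ⊢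
  ext i j
  fin_cases i <;> fin_cases j <;> simp [mul_apply, Fin.sum_univ_three] <;> field_simp <;>
    subst hA <;> ring

end Zmat

/-- If `k₃ > 0`, `k₅ > 0`, `k₃²k₄ − k₃k₅ − k₄² > 0` and `k₃²k₄² − k₃³k₅ − k₄³ > 0`,
then `Z(k₃,k₄,k₅)` is positive definite. -/
theorem stmt4 (k3 k4 k5 : ℝ) (h1 : k3 > 0) (h2 : k5 > 0)
    (h3 : k3^2*k4 - k3*k5 - k4^2 > 0) (h4 : k3^2*k4^2 - k3^3*k5 - k4^3 > 0) :
    (Zmat k3 k4 k5).PosDef := by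
  rw [Zmat.eq_conjTranspose_mul_diagonal_mul h1.ne' h3.ne']
  exact (PosDef.diagonal (Zmat.pivots_pos h1 h2 h3 h4)).conjTranspose_mul_mul_same
    (mulVec_injective_of_isUnit (Zmat.isUnit_unitriangular k3 k4 k5))
end

section
/- Every element of K(c) yields positive definite Y and Z: if (k₃,k₄,k₅) ∈ K(c) with c > 0, then Y(k₃,k₄,k₅,c) and Z(k₃,k₄,k₅) are positive definite. -/
open Matrix

/-- The set `K(c)` of admissible gains from the paper. -/
def Kset (c : ℝ) : Set (ℝ × ℝ × ℝ) :=
  {k | k.2.2 > c ∧ k.1 > 0 ∧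
    k.2.1^2 - 2*k.1*k.2.2 - 2*k.1^2*k.2.2^2 > 0 ∧
    k.1^2*k.2.1 - k.1*k.2.2 - k.2.1^2 > 0 ∧
    k.1^2*k.2.1^2 - k.1^3*k.2.2 - k.2.1^3 > 0 ∧
    k.1^2 - 2*k.2.1 - 2*k.2.2^2 > 0}

theorem Matrix.posDef_fin_three_of_minors_pos {A B C D E F : ℝ} (h₁ : 0 < A)
    (h₂ : 0 < A * D - B ^ 2) (h₃ : 0 < (!![A, B, C; B, D, E; C, E, F]).det) :
    (!![A, B, C; B, D, E; C, E, F]).PosDef := by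
  rw [posDef_iff_dotProduct_mulVec]
  refine ⟨by ext i j; fin_cases i <;> fin_cases j <;> rfl, fun x hx => ?_⟩
  set Δ := (!![A, B, C; B, D, E; C, E, F]).det with hΔ
  simp only [star_trivial, mulVec, dotProduct, Fin.sum_univ_three, of_apply, cons_val',
    cons_val_zero, cons_val_one, cons_val_two, empty_val', cons_val_fin_one, head_cons, tail_cons]
  -- completing the squares, i.e. the `LDLᵀ` factorization
  have hsq : A * (A * D - B ^ 2) * (x 0 * (A * x 0 + B * x 1 + C * x 2)
        + x 1 * (B * x 0 + D * x 1 + E * x 2) + x 2 * (C * x 0 + E * x 1 + F * x 2))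
      = (A * D - B ^ 2) * (A * x 0 + B * x 1 + C * x 2) ^ 2
        + ((A * D - B ^ 2) * x 1 + (A * E - B * C) * x 2) ^ 2 + A * Δ * x 2 ^ 2 := by
    simp only [hΔ, det_fin_three, of_apply, cons_val', cons_val_zero, cons_val_fin_one,
      cons_val_one, cons_val]
    ring
  refine pos_of_mul_pos_right (hsq ▸ ?_) (mul_pos h₁ h₂).le
  have hfirst := mul_nonneg h₂.le (sq_nonneg (A * x 0 + B * x 1 + C * x 2))
  rcases ne_or_eq (x 2) 0 with hx₂ | hx₂
  · linarith [mul_pos (mul_pos h₁ h₃) (sq_pos_of_ne_zero hx₂),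
      sq_nonneg ((A * D - B ^ 2) * x 1 + (A * E - B * C) * x 2)]
  rcases ne_or_eq (x 1) 0 with hx₁ | hx₁
  · simp only [hx₂, mul_zero, add_zero, zero_pow two_ne_zero] at hfirst ⊢
    linarith [sq_pos_of_ne_zero (mul_ne_zero h₂.ne' hx₁)]
  have hx₀ : x 0 ≠ 0 := fun hx₀ => hx (by ext i; fin_cases i <;> assumption)
  simp only [hx₁, hx₂, mul_zero, add_zero, zero_pow two_ne_zero]
  exact mul_pos h₂ (sq_pos_of_ne_zero (mul_ne_zero h₁.ne' hx₀))

theorem Ymat_eq_diagonal_add_vecMulVec (k3 k4 k5 c : ℝ) :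
    Ymat k3 k4 k5 c =
      diagonal ![k3^2 - 2*k4 - 2*k5^2, k4^2 - 2*k3*k5 - 2*k3^2*k5^2, k5^2 - c^2]
        + vecMulVec ![k3, k4, -k5] ![k3, k4, -k5]
        + vecMulVec ![k5, -(k3*k5), 0] ![k5, -(k3*k5), 0] := by
  ext i j
  fin_cases i <;> fin_cases j <;> simp [Ymat, vecMulVec] <;> ring

theorem Ymat_posDef {k3 k4 k5 c : ℝ} (hc : 0 < c) (hk5 : c < k5)
    (h₁ : 0 < k4^2 - 2*k3*k5 - 2*k3^2*k5^2) (h₄ : 0 < k3^2 - 2*k4 - 2*k5^2) :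
    (Ymat k3 k4 k5 c).PosDef := by
  have hdiag : 0 < k5^2 - c^2 := sub_pos.2 (pow_lt_pow_left₀ hk5 hc.le two_ne_zero)
  rw [Ymat_eq_diagonal_add_vecMulVec]
  refine ((PosDef.diagonal ?_).add_posSemidef ?_).add_posSemidef ?_
  · intro i
    fin_cases i
    exacts [h₄, h₁, hdiag]
  · simpa using posSemidef_vecMulVec_self_star ![k3, k4, -k5]
  · simpa using posSemidef_vecMulVec_self_star ![k5, -(k3*k5), 0]

theorem Zmat_det (k3 k4 k5 : ℝ) :
    (Zmat k3 k4 k5).det = k5 * ((k3^2*k4^2 - k3^3*k5 - k4^3) + k5^2) := by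
  simp only [Zmat, det_fin_three, of_apply, cons_val', cons_val_zero, cons_val_fin_one,
    cons_val_one, cons_val]
  ring

theorem Zmat_posDef {k3 k4 k5 : ℝ} (hk3 : 0 < k3) (hk5 : 0 < k5)
    (h₂ : 0 < k3^2*k4 - k3*k5 - k4^2) (h₃ : 0 < k3^2*k4^2 - k3^3*k5 - k4^3) :
    (Zmat k3 k4 k5).PosDef := by
  apply posDef_fin_three_of_minors_pos hk3
  · linear_combination h₂
  · show 0 < (Zmat k3 k4 k5).det
    rw [Zmat_det]
    positivity

/-- If `(k₃,k₄,k₅) ∈ K(c)` with `c > 0`, then `Y(k₃,k₄,k₅,c)` and `Z(k₃,k₄,k₅)`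
are positive definite. -/
theorem stmt8 (k3 k4 k5 c : ℝ) (hc : 0 < c) (hm : (k3, k4, k5) ∈ Kset c) :
    (Ymat k3 k4 k5 c).PosDef ∧ (Zmat k3 k4 k5).PosDef := by
  obtain ⟨hk5, hk3, h₁, h₂, h₃, h₄⟩ := hm
  exact ⟨Ymat_posDef hc hk5 h₁ h₄, Zmat_posDef hk3 (hc.trans hk5) h₂ h₃⟩
end

section
/- Let R ∈ ℝ^{3×3} satisfy RᵀR = I₃, and suppose Z(k₃,k₄,k₅) is positive definite. Then the 9×9 matrix P(R;k₃,k₄,k₅) is symmetric positive definite and satisfies λ_min(Z)‖x‖² ≤ xᵀ P(R) x ≤ λ_max(Z)‖x‖² for every x ∈ ℝ⁹, where λ_min(Z) and λ_max(Z) are the smallest and largest eigenvalues of Z(k₃,k₄,k₅). -/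
open Matrix

/-- Assemble a 3×3 array of 3×3 blocks into a 9×9 matrix (indexed by `Fin 3 × Fin 3`). -/
noncomputable def blockMat3 (B : Fin 3 → Fin 3 → Matrix (Fin 3) (Fin 3) ℝ) :
    Matrix (Fin 3 × Fin 3) (Fin 3 × Fin 3) ℝ :=
  Matrix.of fun p q => B p.1 q.1 p.2 q.2

/-- The 9×9 block matrix `P(R; k₃,k₄,k₅)` from the paper. -/
noncomputable def Pmat (R : Matrix (Fin 3) (Fin 3) ℝ) (k3 k4 k5 : ℝ) :
    Matrix (Fin 3 × Fin 3) (Fin 3 × Fin 3) ℝ :=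
  blockMat3 ![![k3 • 1, k4 • 1, (-k5) • R],
              ![k4 • 1, (k3*k4 - k5) • 1, (-(k3*k5)) • R],
              ![(-k5) • Rᵀ, (-(k3*k5)) • Rᵀ, (k4*k5) • 1]]

/-!
Writing `Q = diag(I₃, I₃, R)`, the hypothesis `RᵀR = I₃` gives both `QᵀQ = I₉` and the
congruence `P = Qᵀ (Z ⊗ I₃) Q`. The Kronecker product with `I₃` and the congruence by `Q`
preserve positive definiteness and the Loewner bounds `λ_min(Z) I ≤ Z ≤ λ_max(Z) I`, and the
latter are exactly the stated bounds on the quadratic form.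
-/

open scoped MatrixOrder ComplexOrder Kronecker

theorem star_mul_algebraMap_mul_of_star_mul_self {R A : Type*} [CommSemiring R] [Semiring A]
    [Algebra R A] [Star A] {Q : A} (hQ : star Q * Q = 1) (r : R) :
    star Q * algebraMap R A r * Q = algebraMap R A r := by
  rw [← Algebra.commutes, mul_assoc, hQ, mul_one]

namespace Matrix

section Order

variable {𝕜 n m : Type*} [RCLike 𝕜] [Fintype n]

theorem kronecker_le_kronecker_right [Fintype m] {A B : Matrix n n 𝕜} (hAB : A ≤ B)
    {C : Matrix m m 𝕜} (hC : C.PosSemidef) : A ⊗ₖ C ≤ B ⊗ₖ C := by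
  have hsub : B ⊗ₖ C - A ⊗ₖ C = (B - A) ⊗ₖ C := by ext; simp [sub_mul]
  rw [le_iff, hsub]
  exact (le_iff.mp hAB).kronecker hC

variable [DecidableEq n]

theorem algebraMap_kronecker_one [Fintype m] [DecidableEq m] (r : ℝ) :
    algebraMap ℝ (Matrix n n 𝕜) r ⊗ₖ (1 : Matrix m m 𝕜) = algebraMap ℝ _ r := by
  simp [Algebra.algebraMap_eq_smul_one, smul_kronecker]

theorem IsHermitian.algebraMap_iInf_eigenvalues_le {A : Matrix n n 𝕜} (hA : A.IsHermitian) :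
    algebraMap ℝ _ (⨅ i, hA.eigenvalues i) ≤ A := by
  rw [algebraMap_le_iff_le_spectrum hA, hA.spectrum_real_eq_range_eigenvalues]
  rintro _ ⟨i, rfl⟩
  exact ciInf_le (Set.finite_range _).bddBelow i

theorem IsHermitian.le_algebraMap_iSup_eigenvalues {A : Matrix n n 𝕜} (hA : A.IsHermitian) :
    A ≤ algebraMap ℝ _ (⨆ i, hA.eigenvalues i) := by
  rw [le_algebraMap_iff_spectrum_le hA, hA.spectrum_real_eq_range_eigenvalues]
  rintro _ ⟨i, rfl⟩
  exact le_ciSup (Set.finite_range _).bddAbove i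

variable [Fintype m] [DecidableEq m] {Q : Matrix (n × m) (n × m) 𝕜}

theorem algebraMap_le_star_mul_kronecker_one_mul (hQ : star Q * Q = 1) {A : Matrix n n 𝕜}
    {r : ℝ} (h : algebraMap ℝ _ r ≤ A) :
    algebraMap ℝ _ r ≤ star Q * (A ⊗ₖ (1 : Matrix m m 𝕜)) * Q := by
  rw [← star_mul_algebraMap_mul_of_star_mul_self hQ, ← algebraMap_kronecker_one]
  exact star_left_conjugate_le_conjugate (kronecker_le_kronecker_right h PosSemidef.one) Q

theorem star_mul_kronecker_one_mul_le_algebraMap (hQ : star Q * Q = 1) {A : Matrix n n 𝕜}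
    {r : ℝ} (h : A ≤ algebraMap ℝ _ r) :
    star Q * (A ⊗ₖ (1 : Matrix m m 𝕜)) * Q ≤ algebraMap ℝ _ r := by
  rw [← star_mul_algebraMap_mul_of_star_mul_self hQ, ← algebraMap_kronecker_one]
  exact star_left_conjugate_le_conjugate (kronecker_le_kronecker_right h PosSemidef.one) Q

end Order

section Real

variable {n : Type*} [Fintype n]

theorem dotProduct_mulVec_le_of_le {A B : Matrix n n ℝ} (hAB : A ≤ B) (x : n → ℝ) :
    x ⬝ᵥ A *ᵥ x ≤ x ⬝ᵥ B *ᵥ x := by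
  have := (le_iff.mp hAB).dotProduct_mulVec_nonneg x
  rw [sub_mulVec, dotProduct_sub, star_trivial] at this
  linarith

theorem dotProduct_algebraMap_mulVec [DecidableEq n] (r : ℝ) (x : n → ℝ) :
    x ⬝ᵥ algebraMap ℝ (Matrix n n ℝ) r *ᵥ x = r * ∑ j, x j ^ 2 := by
  simp [Algebra.algebraMap_eq_smul_one, smul_mulVec, dotProduct, Finset.mul_sum, sq,
    mul_left_comm]

end Real

variable {I J K L R : Type*}

theorem comp_conjTranspose [Star R] (M : Matrix I I (Matrix J J R)) :
    comp I I J J R Mᴴ = (comp I I J J R M)ᴴ := rfl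

theorem kronecker_eq_comp [Mul R] (A : Matrix I J R) (B : Matrix K L R) :
    A ⊗ₖ B = comp I J K L R (A.map (· • B)) := rfl

end Matrix

theorem blockMat3_eq_comp (B : Fin 3 → Fin 3 → Matrix (Fin 3) (Fin 3) ℝ) :
    blockMat3 B = comp _ _ _ _ ℝ (of B) := rfl

noncomputable def rotationFrame (R : Matrix (Fin 3) (Fin 3) ℝ) :
    Matrix (Fin 3 × Fin 3) (Fin 3 × Fin 3) ℝ :=
  comp _ _ _ _ ℝ (diagonal ![1, 1, R])

section rotationFrame

variable {R : Matrix (Fin 3) (Fin 3) ℝ}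

theorem star_rotationFrame_mul_self (hR : Rᵀ * R = 1) :
    star (rotationFrame R) * rotationFrame R = 1 := by
  rw [rotationFrame, star_eq_conjTranspose, ← comp_conjTranspose, ← compRingEquiv_apply,
    ← compRingEquiv_apply, ← map_mul, compRingEquiv_apply, ← comp_one]
  congr 1
  rw [diagonal_conjTranspose, diagonal_mul_diagonal, ← diagonal_one]
  congr 1
  ext i : 1
  fin_cases i <;> simp [star_eq_conjTranspose, hR]

theorem Pmat_eq_star_mul_kronecker_mul (hR : Rᵀ * R = 1) (k3 k4 k5 : ℝ) :
    Pmat R k3 k4 k5 = star (rotationFrame R) * (Zmat k3 k4 k5 ⊗ₖ 1) * rotationFrame R := by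
  rw [rotationFrame, star_eq_conjTranspose, ← comp_conjTranspose, kronecker_eq_comp,
    ← compRingEquiv_apply, ← compRingEquiv_apply, ← compRingEquiv_apply, ← map_mul, ← map_mul,
    compRingEquiv_apply, Pmat, blockMat3_eq_comp]
  congr 1
  ext i j : 1
  simp only [diagonal_conjTranspose, diagonal_mul, mul_diagonal, map_apply]
  fin_cases i <;> fin_cases j <;> simp [Zmat, star_eq_conjTranspose, hR]

end rotationFrame

/-- If `RᵀR = I₃` and `Z(k₃,k₄,k₅)` is positive definite, then `P(R;k₃,k₄,k₅)` is
symmetric positive definite and `λ_min(Z)‖x‖² ≤ xᵀ P(R) x ≤ λ_max(Z)‖x‖²` for all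
`x ∈ ℝ⁹`. -/
theorem stmt13 (k3 k4 k5 : ℝ) (R : Matrix (Fin 3) (Fin 3) ℝ)
    (hR : Rᵀ * R = 1) (hZ : (Zmat k3 k4 k5).PosDef) :
    (Pmat R k3 k4 k5).IsSymm ∧ (Pmat R k3 k4 k5).PosDef ∧
    ∀ x : Fin 3 × Fin 3 → ℝ,
      (⨅ i, hZ.1.eigenvalues i) * (∑ j, x j ^ 2) ≤ x ⬝ᵥ (Pmat R k3 k4 k5).mulVec x ∧
      x ⬝ᵥ (Pmat R k3 k4 k5).mulVec x ≤ (⨆ i, hZ.1.eigenvalues i) * (∑ j, x j ^ 2) := by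
  have hQ := star_rotationFrame_mul_self hR
  have hP := Pmat_eq_star_mul_kronecker_mul hR k3 k4 k5
  have hPosDef : (Pmat R k3 k4 k5).PosDef := by
    have hinj : Function.Injective (rotationFrame R).mulVec :=
      Function.LeftInverse.injective (g := (star (rotationFrame R)).mulVec) fun x => by
        rw [mulVec_mulVec, hQ, one_mulVec]
    rw [hP, star_eq_conjTranspose]
    exact (hZ.kronecker (PosDef.one (n := Fin 3))).conjTranspose_mul_mul_same hinj
  have hlow : algebraMap ℝ _ (⨅ i, hZ.1.eigenvalues i) ≤ Pmat R k3 k4 k5 :=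
    hP ▸ algebraMap_le_star_mul_kronecker_one_mul hQ hZ.1.algebraMap_iInf_eigenvalues_le
  have hup : Pmat R k3 k4 k5 ≤ algebraMap ℝ _ (⨆ i, hZ.1.eigenvalues i) :=
    hP ▸ star_mul_kronecker_one_mul_le_algebraMap hQ hZ.1.le_algebraMap_iSup_eigenvalues
  refine ⟨isHermitian_iff_isSymm.mp hPosDef.isHermitian, hPosDef, fun x => ⟨?_, ?_⟩⟩
  · simpa [dotProduct_algebraMap_mulVec] using dotProduct_mulVec_le_of_le hlow x
  · simpa [dotProduct_algebraMap_mulVec] using dotProduct_mulVec_le_of_le hup x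
end

section
/- Let R ∈ ℝ^{3×3} with RᵀR = I₃, let Ω ∈ ℝ³ and c ∈ ℝ, and let k₃,k₄,k₅ ∈ ℝ. Let P = P(R;k₃,k₄,k₅), let Ṗ denote the 9×9 block matrix obtained from P by replacing each occurrence of R by R·Ω× (and each Rᵀ by (R·Ω×)ᵀ), and let A be the 9×9 block matrix with block rows [−k₃I₃, I₃, 0], [−k₄I₃, 0, −R], [k₅Rᵀ, 0, 0]. Then A P + P Aᵀ − Ṗ = −(CᵀC + D + Q), where C = [k₅I₃, k₃k₅I₃, −R·Ω×] (a 3×9 matrix), D is the 9×9 block-diagonal matrix diag(0₃, 0₃, c²I₃ − Ω×ᵀΩ×), and Q = U(R)ᵀ (Y(k₃,k₄,k₅,c) ⊗ I₃) U(R) with U(R) = diag(I₃, I₃, R). -/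
open Matrix Kronecker

/-- The skew-symmetric matrix `v×` associated to `v ∈ ℝ³`. -/
noncomputable def skewMat (v : Fin 3 → ℝ) : Matrix (Fin 3) (Fin 3) ℝ :=
  !![0, -v 2, v 1;
     v 2, 0, -v 0;
     -v 1, v 0, 0]

/-- `Ṗ`: the block matrix obtained from `P(R;k₃,k₄,k₅)` by replacing each occurrence
of `R` by `R·Ω×` (and `Rᵀ` by `(R·Ω×)ᵀ`). -/
noncomputable def Pdot (R : Matrix (Fin 3) (Fin 3) ℝ) (Ω : Fin 3 → ℝ) (k3 k4 k5 : ℝ) :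
    Matrix (Fin 3 × Fin 3) (Fin 3 × Fin 3) ℝ :=
  blockMat3 ![![0, 0, (-k5) • (R * skewMat Ω)],
              ![0, 0, (-(k3*k5)) • (R * skewMat Ω)],
              ![(-k5) • (R * skewMat Ω)ᵀ, (-(k3*k5)) • (R * skewMat Ω)ᵀ, 0]]

/-- The 9×9 block matrix `A` with block rows `[−k₃I₃, I₃, 0]`, `[−k₄I₃, 0, −R]`,
`[k₅Rᵀ, 0, 0]`. -/
noncomputable def Amat (R : Matrix (Fin 3) (Fin 3) ℝ) (k3 k4 k5 : ℝ) :
    Matrix (Fin 3 × Fin 3) (Fin 3 × Fin 3) ℝ :=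
  blockMat3 ![![(-k3) • 1, 1, 0], ![(-k4) • 1, 0, -R], ![k5 • Rᵀ, 0, 0]]

/-- The 3×9 matrix `C = [k₅I₃, k₃k₅I₃, −R·Ω×]`. -/
noncomputable def Cmat (R : Matrix (Fin 3) (Fin 3) ℝ) (Ω : Fin 3 → ℝ) (k3 k5 : ℝ) :
    Matrix (Fin 3) (Fin 3 × Fin 3) ℝ :=
  Matrix.of fun a q =>
    (![k5 • (1 : Matrix (Fin 3) (Fin 3) ℝ), (k3*k5) • 1, -(R * skewMat Ω)] q.1) a q.2

/-- The 9×9 block-diagonal matrix `D = diag(0₃, 0₃, c²I₃ − Ω×ᵀΩ×)`. -/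
noncomputable def Dmat (Ω : Fin 3 → ℝ) (c : ℝ) :
    Matrix (Fin 3 × Fin 3) (Fin 3 × Fin 3) ℝ :=
  blockMat3 ![![0, 0, 0], ![0, 0, 0],
              ![0, 0, c^2 • (1 : Matrix (Fin 3) (Fin 3) ℝ) - (skewMat Ω)ᵀ * skewMat Ω]]

/-- The 9×9 block-diagonal matrix `U(R) = diag(I₃, I₃, R)`. -/
noncomputable def Umat (R : Matrix (Fin 3) (Fin 3) ℝ) :
    Matrix (Fin 3 × Fin 3) (Fin 3 × Fin 3) ℝ :=
  blockMat3 ![![1, 0, 0], ![0, 1, 0], ![0, 0, R]]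

lemma blockMat3_mul (B C : Fin 3 → Fin 3 → Matrix (Fin 3) (Fin 3) ℝ) :
    blockMat3 B * blockMat3 C = blockMat3 (fun i j => ∑ k, B i k * C k j) := by
  ext ⟨i, a⟩ ⟨j, b⟩
  simp [blockMat3, Matrix.mul_apply, Matrix.sum_apply, Fintype.sum_prod_type]

lemma blockMat3_add (B C : Fin 3 → Fin 3 → Matrix (Fin 3) (Fin 3) ℝ) :
    blockMat3 B + blockMat3 C = blockMat3 (fun i j => B i j + C i j) := by
  ext ⟨i, a⟩ ⟨j, b⟩; simp [blockMat3]

lemma blockMat3_sub (B C : Fin 3 → Fin 3 → Matrix (Fin 3) (Fin 3) ℝ) :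
    blockMat3 B - blockMat3 C = blockMat3 (fun i j => B i j - C i j) := by
  ext ⟨i, a⟩ ⟨j, b⟩; simp [blockMat3]

lemma blockMat3_neg (B : Fin 3 → Fin 3 → Matrix (Fin 3) (Fin 3) ℝ) :
    -blockMat3 B = blockMat3 (fun i j => -(B i j)) := by
  ext ⟨i, a⟩ ⟨j, b⟩; simp [blockMat3]

lemma blockMat3_transpose (B : Fin 3 → Fin 3 → Matrix (Fin 3) (Fin 3) ℝ) :
    (blockMat3 B)ᵀ = blockMat3 (fun i j => (B j i)ᵀ) := by
  ext ⟨i, a⟩ ⟨j, b⟩; simp [blockMat3]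

lemma kron_blockMat3 (Y : Matrix (Fin 3) (Fin 3) ℝ) :
    Y ⊗ₖ (1 : Matrix (Fin 3) (Fin 3) ℝ) = blockMat3 (fun i j => Y i j • 1) := by
  ext ⟨i, a⟩ ⟨j, b⟩
  simp [blockMat3, Matrix.kroneckerMap_apply, smul_eq_mul]

/-- If `RᵀR = I₃`, then `A P + P Aᵀ − Ṗ = −(CᵀC + D + Q)`, where
`Q = U(R)ᵀ (Y(k₃,k₄,k₅,c) ⊗ I₃) U(R)`. -/
theorem stmt15 (R : Matrix (Fin 3) (Fin 3) ℝ) (hR : Rᵀ * R = 1)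
    (Ω : Fin 3 → ℝ) (c k3 k4 k5 : ℝ) :
    Amat R k3 k4 k5 * Pmat R k3 k4 k5 + Pmat R k3 k4 k5 * (Amat R k3 k4 k5)ᵀ -
        Pdot R Ω k3 k4 k5 =
      -((Cmat R Ω k3 k5)ᵀ * Cmat R Ω k3 k5 + Dmat Ω c +
        (Umat R)ᵀ * (Ymat k3 k4 k5 c ⊗ₖ (1 : Matrix (Fin 3) (Fin 3) ℝ)) * Umat R) := by
  have hR' : R * Rᵀ = 1 := by rwa [mul_eq_one_comm] at hR
  have h1 : ∀ M : Matrix (Fin 3) (Fin 3) ℝ, Rᵀ * (R * M) = M := fun M => by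
    rw [← Matrix.mul_assoc, hR, one_mul]
  have h2 : ∀ M : Matrix (Fin 3) (Fin 3) ℝ, R * (Rᵀ * M) = M := fun M => by
    rw [← Matrix.mul_assoc, hR', one_mul]
  have hC : (Cmat R Ω k3 k5)ᵀ * Cmat R Ω k3 k5 =
      blockMat3 (fun i j =>
        (![k5 • (1 : Matrix (Fin 3) (Fin 3) ℝ), (k3*k5) • 1, -(R * skewMat Ω)] i)ᵀ *
        (![k5 • (1 : Matrix (Fin 3) (Fin 3) ℝ), (k3*k5) • 1, -(R * skewMat Ω)] j)) := by
    ext ⟨i, a⟩ ⟨j, b⟩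
    simp [Cmat, blockMat3, Matrix.mul_apply]
  rw [hC]
  simp only [Amat, Pmat, Pdot, Dmat, Umat, kron_blockMat3]
  simp only [blockMat3_mul, blockMat3_transpose, blockMat3_add, blockMat3_sub, blockMat3_neg]
  apply congrArg blockMat3
  funext i j
  fin_cases i <;> fin_cases j <;>
    simp [Ymat, Matrix.vecHead, Matrix.vecTail, Fin.sum_univ_three, Matrix.smul_mul, Matrix.mul_smul, smul_smul,
      Matrix.transpose_smul, Matrix.mul_assoc, hR, hR', h1, h2, Matrix.transpose_mul] <;>
    module
end

section
/- Let n, m ∈ ℕ and let C ∈ ℝ^{m×n} be constant, Q ∈ ℝ^{m×m} and V ∈ ℝ^{n×n} constant symmetric positive definite matrices, and A : [0,∞) → ℝ^{n×n} continuous. Suppose P : [0,∞) → ℝ^{n×n} is differentiable, P(t) is symmetric for each t, satisfies the Riccati equation P'(t) = A(t)P(t) + P(t)A(t)ᵀ − P(t)CᵀQC P(t) + V for all t, and there are constants 0 < q_m ≤ q_M with q_m I_n ≤ P(t) ≤ q_M I_n (in the positive semidefinite order) for all t. If x : [0,∞) → ℝⁿ is differentiable with x'(t) = (A(t) − P(t)CᵀQC)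 x(t) for all t, then ‖x(t)‖ ≤ √(q_M/q_m) · e^{−λt} ‖x(0)‖ for all t ≥ 0, where λ = q_m λ_min(V) / (2 q_M²) and λ_min(V) > 0 is the smallest eigenvalue of V. -/
/-!
Along the closed loop, the Lyapunov function `W = xᵀ P⁻¹ x` satisfies, by the Riccati equation,
`W' = -xᵀ CᵀQC x - (P⁻¹x)ᵀ V (P⁻¹x) ≤ -λ_min(V) ‖P⁻¹x‖² ≤ -(λ_min(V) / q_M) W`, the last step
because `P ≤ q_M`. Grönwall's inequality then gives exponential decay of `W`, and `W` is
comparable to `‖x‖²`: conjugating `q_m ≤ P ≤ q_M` by `√P` gives `q_m P ≤ P² ≤ q_M P`, i.e.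
`q_M⁻¹ ‖x‖² ≤ W ≤ q_m⁻¹ ‖x‖²`. The rate `λ_min(V) / q_M` obtained this way is at least the
claimed `q_m λ_min(V) / q_M²`.
-/

open Matrix

/-- The Euclidean norm of a vector in ℝⁿ. -/
noncomputable def enormN {n : ℕ} (v : Fin n → ℝ) : ℝ := Real.sqrt (∑ i, v i ^ 2)

open scoped MatrixOrder

section LoewnerOrder

open scoped ComplexOrder

variable {n 𝕜 : Type*} [DecidableEq n] [RCLike 𝕜] {P : Matrix n n 𝕜} {c : ℝ}

theorem Matrix.posDef_of_smul_one_le (hc : 0 < c) (h : c • 1 ≤ P) : P.PosDef :=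
  sub_add_cancel P (c • 1) ▸ PosDef.posSemidef_add h (PosDef.one.smul hc)

variable [Fintype n]

theorem Matrix.smul_le_mul_self_of_smul_one_le (hP : 0 ≤ P) (h : c • 1 ≤ P) :
    c • P ≤ P * P := by
  obtain ⟨S, hS, rfl⟩ : ∃ S, 0 ≤ S ∧ S * S = P :=
    ⟨CFC.sqrt P, CFC.sqrt_nonneg P, CFC.sqrt_mul_sqrt_self P hP⟩
  simpa [Matrix.mul_smul, Matrix.smul_mul, Matrix.mul_assoc] using
    conjugate_le_conjugate_of_nonneg h hS

theorem Matrix.mul_self_le_smul_of_le_smul_one (hP : 0 ≤ P) (h : P ≤ c • 1) :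
    P * P ≤ c • P := by
  obtain ⟨S, hS, rfl⟩ : ∃ S, 0 ≤ S ∧ S * S = P :=
    ⟨CFC.sqrt P, CFC.sqrt_nonneg P, CFC.sqrt_mul_sqrt_self P hP⟩
  simpa [Matrix.mul_smul, Matrix.smul_mul, Matrix.mul_assoc] using
    conjugate_le_conjugate_of_nonneg h hS

theorem Matrix.IsHermitian.iInf_eigenvalues_smul_one_le {A : Matrix n n 𝕜} (hA : A.IsHermitian) :
    (⨅ i, hA.eigenvalues i) • 1 ≤ A := by
  rw [← Algebra.algebraMap_eq_smul_one]
  refine algebraMap_le_of_le_spectrum (fun x hx => ?_) hA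
  obtain ⟨i, rfl⟩ := hA.spectrum_real_eq_range_eigenvalues ▸ hx
  exact ciInf_le (Finite.bddBelow_range _) i

end LoewnerOrder

section QuadraticForm

variable {n : Type*} [Fintype n] {A B P : Matrix n n ℝ} {c : ℝ}

theorem Matrix.dotProduct_mulVec_le_of_le_s19 (h : A ≤ B) (v : n → ℝ) :
    v ⬝ᵥ A *ᵥ v ≤ v ⬝ᵥ B *ᵥ v := by
  simpa [sub_mulVec, dotProduct_sub] using (Matrix.le_iff.mp h).dotProduct_mulVec_nonneg v

theorem Matrix.IsSymm.mulVec_dotProduct (hA : A.IsSymm) (v w : n → ℝ) :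
    A *ᵥ v ⬝ᵥ w = v ⬝ᵥ A *ᵥ w := by
  rw [dotProduct_comm, ← dotProduct_transpose_mulVec, hA.eq]

theorem Matrix.IsSymm.mulVec_dotProduct_mulVec (hA : A.IsSymm) (v : n → ℝ) :
    A *ᵥ v ⬝ᵥ A *ᵥ v = v ⬝ᵥ (A * A) *ᵥ v := by
  rw [hA.mulVec_dotProduct, mulVec_mulVec]

variable [DecidableEq n]

theorem Matrix.dotProduct_mulVec_le_smul_dotProduct (h : A ≤ c • 1) (v : n → ℝ) :
    v ⬝ᵥ A *ᵥ v ≤ c * (v ⬝ᵥ v) := by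
  simpa [smul_mulVec] using dotProduct_mulVec_le_of_le_s19 h v

theorem Matrix.smul_dotProduct_le_dotProduct_mulVec (h : c • 1 ≤ A) (v : n → ℝ) :
    c * (v ⬝ᵥ v) ≤ v ⬝ᵥ A *ᵥ v := by
  simpa [smul_mulVec] using dotProduct_mulVec_le_of_le_s19 h v

theorem Matrix.smul_dotProduct_mulVec_le_mulVec_dotProduct_mulVec (hP : 0 ≤ P) (h : c • 1 ≤ P)
    (v : n → ℝ) : c * (v ⬝ᵥ P *ᵥ v) ≤ P *ᵥ v ⬝ᵥ P *ᵥ v := by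
  rw [(isHermitian_iff_isSymm.mp hP.posSemidef.isHermitian).mulVec_dotProduct_mulVec]
  simpa [smul_mulVec] using dotProduct_mulVec_le_of_le_s19 (smul_le_mul_self_of_smul_one_le hP h) v

theorem Matrix.mulVec_dotProduct_mulVec_le_smul_dotProduct_mulVec (hP : 0 ≤ P) (h : P ≤ c • 1)
    (v : n → ℝ) : P *ᵥ v ⬝ᵥ P *ᵥ v ≤ c * (v ⬝ᵥ P *ᵥ v) := by
  rw [(isHermitian_iff_isSymm.mp hP.posSemidef.isHermitian).mulVec_dotProduct_mulVec]
  simpa [smul_mulVec] using dotProduct_mulVec_le_of_le_s19 (mul_self_le_smul_of_le_smul_one hP h) v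

end QuadraticForm

section Calculus

variable {m n : Type*} [Fintype n] {t : ℝ}

theorem Matrix.hasDerivAt_iff {f : ℝ → Matrix m n ℝ} {f' : Matrix m n ℝ} :
    HasDerivAt f f' t ↔ ∀ i j, HasDerivAt (fun s => f s i j) (f' i j) t :=
  hasDerivAt_pi.trans (forall_congr' fun _ => hasDerivAt_pi)

theorem HasDerivAt.matrix_inv [DecidableEq n] {f : ℝ → Matrix n n ℝ} {f' : Matrix n n ℝ}
    (hf : HasDerivAt f f' t) (hu : IsUnit (f t)) :
    HasDerivAt (fun s => (f s)⁻¹) (-((f t)⁻¹ * f' * (f t)⁻¹)) t := by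
  -- any normed-algebra structure inducing the product topology serves for differentiating inversion
  let := Matrix.linftyOpNormedRing (n := n) (α := ℝ)
  let := Matrix.linftyOpNormedAlgebra (n := n) (R := ℝ) (α := ℝ)
  obtain ⟨u, hu⟩ := hu
  have hinv : HasFDerivAt Ring.inverse _ (f t) := hu ▸ hasFDerivAt_ringInverse (𝕜 := ℝ) u
  have h := hinv.comp_hasDerivAt t hf
  simp only [Function.comp_def, ← Matrix.nonsing_inv_eq_ringInverse,
    Matrix.coe_units_inv, hu] at h
  exact h

theorem HasDerivAt.dotProduct {f g : ℝ → n → ℝ} {f' g' : n → ℝ}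
    (hf : HasDerivAt f f' t) (hg : HasDerivAt g g' t) :
    HasDerivAt (fun s => f s ⬝ᵥ g s) (f' ⬝ᵥ g t + f t ⬝ᵥ g') t := by
  simp only [_root_.dotProduct, ← Finset.sum_add_distrib]
  exact HasDerivAt.fun_sum fun i _ => (hasDerivAt_pi.1 hf i).mul (hasDerivAt_pi.1 hg i)

theorem HasDerivAt.mulVec {M : ℝ → Matrix m n ℝ} {M' : Matrix m n ℝ} {u : ℝ → n → ℝ}
    {u' : n → ℝ} (hM : HasDerivAt M M' t) (hu : HasDerivAt u u' t) :
    HasDerivAt (fun s => M s *ᵥ u s) (M' *ᵥ u t + M t *ᵥ u') t :=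
  hasDerivAt_pi.2 fun i => (hasDerivAt_pi.1 hM i).dotProduct hu

theorem le_mul_exp_of_hasDerivAt_le_mul {f f' : ℝ → ℝ} {K a b : ℝ} (hab : a ≤ b)
    (hf : ∀ s ∈ Set.Icc a b, HasDerivAt f (f' s) s) (hf' : ∀ s ∈ Set.Ico a b, f' s ≤ K * f s) :
    f b ≤ f a * Real.exp (K * (b - a)) := by
  have := le_gronwallBound_of_liminf_deriv_right_le (ε := 0)
    (fun s hs => (hf s hs).continuousAt.continuousWithinAt)
    (fun s hs r hr => (hf s (Set.Ico_subset_Icc_self hs)).hasDerivWithinAt.liminf_right_slope_le hr)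
    le_rfl (by simpa using hf') b ⟨hab, le_rfl⟩
  rwa [gronwallBound_ε0] at this

end Calculus

section LyapunovFunction

variable {n : Type*} [Fintype n] [DecidableEq n] {P : Matrix n n ℝ} {c : ℝ}

theorem Matrix.nonsing_inv_mulVec_mulVec (hP : IsUnit P) (w : n → ℝ) : P⁻¹ *ᵥ P *ᵥ w = w := by
  rw [mulVec_mulVec, nonsing_inv_mul _ ((isUnit_iff_isUnit_det _).1 hP), one_mulVec]

theorem Matrix.dotProduct_nonsing_inv_mulVec_le (hP : IsUnit P) (h : P ≤ c • 1) (v : n → ℝ) :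
    v ⬝ᵥ P⁻¹ *ᵥ v ≤ c * (P⁻¹ *ᵥ v ⬝ᵥ P⁻¹ *ᵥ v) := by
  obtain ⟨w, rfl⟩ := mulVec_surjective_iff_isUnit.2 hP v
  rw [nonsing_inv_mulVec_mulVec hP, dotProduct_comm]
  exact dotProduct_mulVec_le_smul_dotProduct h w

theorem Matrix.PosDef.smul_dotProduct_nonsing_inv_mulVec_le (hP : P.PosDef) (h : c • 1 ≤ P)
    (v : n → ℝ) : c * (v ⬝ᵥ P⁻¹ *ᵥ v) ≤ v ⬝ᵥ v := by
  obtain ⟨w, rfl⟩ := mulVec_surjective_iff_isUnit.2 hP.isUnit v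
  rw [nonsing_inv_mulVec_mulVec hP.isUnit, dotProduct_comm]
  exact smul_dotProduct_mulVec_le_mulVec_dotProduct_mulVec hP.posSemidef.nonneg h w

theorem Matrix.PosDef.dotProduct_self_le_smul_dotProduct_nonsing_inv_mulVec (hP : P.PosDef)
    (h : P ≤ c • 1) (v : n → ℝ) : v ⬝ᵥ v ≤ c * (v ⬝ᵥ P⁻¹ *ᵥ v) := by
  obtain ⟨w, rfl⟩ := mulVec_surjective_iff_isUnit.2 hP.isUnit v
  rw [nonsing_inv_mulVec_mulVec hP.isUnit, dotProduct_comm (P *ᵥ w) w]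
  exact mulVec_dotProduct_mulVec_le_smul_dotProduct_mulVec hP.posSemidef.nonneg h w

theorem lyapunov_derivative_le {K V : Matrix n n ℝ} {μ : ℝ} (hK : K.PosSemidef) (hV : μ • 1 ≤ V)
    (hμ : 0 ≤ μ) (hc : 0 < c) (hP : IsUnit P) (h : P ≤ c • 1) (v : n → ℝ) :
    -(v ⬝ᵥ K *ᵥ v) - P⁻¹ *ᵥ v ⬝ᵥ V *ᵥ P⁻¹ *ᵥ v ≤ -(μ / c) * (v ⬝ᵥ P⁻¹ *ᵥ v) := by
  have hKv : 0 ≤ v ⬝ᵥ K *ᵥ v := by simpa using hK.dotProduct_mulVec_nonneg v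
  have hVw := smul_dotProduct_le_dotProduct_mulVec hV (P⁻¹ *ᵥ v)
  have hW : μ / c * (v ⬝ᵥ P⁻¹ *ᵥ v) ≤ μ * (P⁻¹ *ᵥ v ⬝ᵥ P⁻¹ *ᵥ v) :=
    calc μ / c * (v ⬝ᵥ P⁻¹ *ᵥ v) ≤ μ / c * (c * (P⁻¹ *ᵥ v ⬝ᵥ P⁻¹ *ᵥ v)) := by
          gcongr
          exact dotProduct_nonsing_inv_mulVec_le hP h v
      _ = μ * (P⁻¹ *ᵥ v ⬝ᵥ P⁻¹ *ᵥ v) := by field_simp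
  linarith

end LyapunovFunction

section Riccati

variable {n : Type*} [Fintype n] [DecidableEq n]

theorem riccati_lyapunov_identity {A P N K V : Matrix n n ℝ} (hNP : N * P = 1)
    (hPN : P * N = 1) (hP : P.IsSymm) (hK : K.IsSymm) :
    (A - P * K)ᵀ * N - N * (A * P + P * Aᵀ - P * K * P + V) * N + N * (A - P * K) =
      -K - N * V * N := by
  have hNPX (X : Matrix n n ℝ) : N * (P * X) = X := by rw [← Matrix.mul_assoc, hNP, Matrix.one_mul]
  simp only [transpose_sub, transpose_mul, hP.eq, hK.eq, Matrix.mul_add, Matrix.add_mul,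
    Matrix.mul_sub, Matrix.sub_mul, Matrix.mul_assoc, hNPX, hPN, Matrix.mul_one]
  abel

theorem hasDerivAt_dotProduct_inv_mulVec_of_riccati {A P : ℝ → Matrix n n ℝ}
    {K V : Matrix n n ℝ} {x : ℝ → n → ℝ} {t : ℝ} (hPt : IsUnit (P t)) (hPsymm : (P t).IsSymm)
    (hK : K.IsSymm) (hP : HasDerivAt P (A t * P t + P t * (A t)ᵀ - P t * K * P t + V) t)
    (hx : HasDerivAt x ((A t - P t * K) *ᵥ x t) t) :
    HasDerivAt (fun s => x s ⬝ᵥ (P s)⁻¹ *ᵥ x s)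
      (-(x t ⬝ᵥ K *ᵥ x t) - (P t)⁻¹ *ᵥ x t ⬝ᵥ V *ᵥ (P t)⁻¹ *ᵥ x t) t := by
  have hdet := (isUnit_iff_isUnit_det _).1 hPt
  have hN : ((P t)⁻¹).IsSymm := by rw [IsSymm, transpose_nonsing_inv, hPsymm.eq]
  convert hx.dotProduct ((hP.matrix_inv hPt).mulVec hx) using 1
  set N := (P t)⁻¹
  set B := A t - P t * K
  set v := x t
  calc -(v ⬝ᵥ K *ᵥ v) - N *ᵥ v ⬝ᵥ V *ᵥ N *ᵥ v = v ⬝ᵥ (-K - N * V * N) *ᵥ v := by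
        rw [hN.mulVec_dotProduct, sub_mulVec, neg_mulVec, dotProduct_sub, dotProduct_neg,
          ← mulVec_mulVec, ← mulVec_mulVec]
    _ = v ⬝ᵥ ((Bᵀ * N - N * (A t * P t + P t * (A t)ᵀ - P t * K * P t + V) * N + N * B) *ᵥ v) := by
        rw [riccati_lyapunov_identity (nonsing_inv_mul _ hdet) (mul_nonsing_inv _ hdet) hPsymm hK]
    _ = _ := by
        simp only [add_mulVec, sub_mulVec, dotProduct_add, dotProduct_sub, ← mulVec_mulVec,
          dotProduct_transpose_mulVec, neg_mulVec, dotProduct_neg, dotProduct_comm (B *ᵥ v)]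
        ring

theorem dotProduct_inv_mulVec_le_mul_exp_of_riccati {A P : ℝ → Matrix n n ℝ}
    {K V : Matrix n n ℝ} {x : ℝ → n → ℝ} {μ c : ℝ} (hK : K.PosSemidef) (hV : μ • 1 ≤ V)
    (hμ : 0 ≤ μ) (hc : 0 < c) (hP : ∀ s ≥ 0, (P s).PosDef) (hPc : ∀ s ≥ 0, P s ≤ c • 1)
    (hP' : ∀ s ≥ 0, HasDerivAt P (A s * P s + P s * (A s)ᵀ - P s * K * P s + V) s)
    (hx : ∀ s ≥ 0, HasDerivAt x ((A s - P s * K) *ᵥ x s) s) {t : ℝ} (ht : 0 ≤ t) :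
    x t ⬝ᵥ (P t)⁻¹ *ᵥ x t ≤ x 0 ⬝ᵥ (P 0)⁻¹ *ᵥ x 0 * Real.exp (-(μ / c) * t) := by
  have hKsymm := isHermitian_iff_isSymm.mp hK.isHermitian
  simpa using le_mul_exp_of_hasDerivAt_le_mul ht
    (fun s hs => hasDerivAt_dotProduct_inv_mulVec_of_riccati (hP s hs.1).isUnit
      (isHermitian_iff_isSymm.mp (hP s hs.1).isHermitian) hKsymm (hP' s hs.1) (hx s hs.1))
    fun s hs => lyapunov_derivative_le hK hV hμ hc (hP s hs.1).isUnit (hPc s hs.1) (x s)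

end Riccati

theorem enormN_eq_sqrt_dotProduct {n : ℕ} (v : Fin n → ℝ) : enormN v = √(v ⬝ᵥ v) := by
  simp [enormN, dotProduct, sq]

theorem enormN_le_mul_of_dotProduct_le {n : ℕ} {u v : Fin n → ℝ} {c : ℝ} (hc : 0 ≤ c)
    (h : v ⬝ᵥ v ≤ c ^ 2 * (u ⬝ᵥ u)) : enormN v ≤ c * enormN u := by
  rw [enormN_eq_sqrt_dotProduct, enormN_eq_sqrt_dotProduct, ← Real.sqrt_sq hc,
    ← Real.sqrt_mul (sq_nonneg c)]
  exact Real.sqrt_le_sqrt h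

theorem stmt19_general (n m : ℕ)
    (C : Matrix (Fin m) (Fin n) ℝ) (Q : Matrix (Fin m) (Fin m) ℝ)
    (V : Matrix (Fin n) (Fin n) ℝ) (hQ : Q.PosDef) (hV : V.PosDef)
    (A P : ℝ → Matrix (Fin n) (Fin n) ℝ)
    (hP' : ∀ t ≥ (0:ℝ), ∀ i j : Fin n, HasDerivAt (fun s => P s i j)
      ((A t * P t + P t * (A t)ᵀ - P t * Cᵀ * Q * C * P t + V) i j) t)
    (qm qM : ℝ) (hqm : 0 < qm) (hqmM : qm ≤ qM)
    (hPlb : ∀ t ≥ (0:ℝ), (P t - qm • 1).PosSemidef)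
    (hPub : ∀ t ≥ (0:ℝ), (qM • 1 - P t).PosSemidef)
    (x : ℝ → Fin n → ℝ)
    (hx : ∀ t ≥ (0:ℝ), ∀ i : Fin n, HasDerivAt (fun s => x s i)
      ((A t - P t * Cᵀ * Q * C).mulVec (x t) i) t) :
    ∀ t ≥ (0:ℝ), enormN (x t) ≤
      Real.sqrt (qM / qm) *
        Real.exp (-(qm * (⨅ i, hV.1.eigenvalues i) / (2 * qM ^ 2)) * t) *
        enormN (x 0) := by
  intro t ht
  set μ := ⨅ i, hV.1.eigenvalues i
  have hqM : 0 < qM := hqm.trans_le hqmM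
  have hμ : 0 ≤ μ := Real.iInf_nonneg fun i => (hV.eigenvalues_pos i).le
  have hK : (Cᵀ * Q * C).PosSemidef := by
    simpa [conjTranspose_eq_transpose_of_trivial] using hQ.posSemidef.conjTranspose_mul_mul_same C
  have hPpos (s : ℝ) (hs : 0 ≤ s) : (P s).PosDef := posDef_of_smul_one_le hqm (hPlb s hs)
  have hdecay := dotProduct_inv_mulVec_le_mul_exp_of_riccati hK hV.1.iInf_eigenvalues_smul_one_le
    hμ hqM hPpos hPub
    (fun s hs => by simpa only [Matrix.mul_assoc] using Matrix.hasDerivAt_iff.2 (hP' s hs))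
    (fun s hs => by simpa only [Matrix.mul_assoc] using hasDerivAt_pi.2 (hx s hs)) ht
  have hWt := (hPpos t ht).dotProduct_self_le_smul_dotProduct_nonsing_inv_mulVec (hPub t ht) (x t)
  have hW0 := (hPpos 0 le_rfl).smul_dotProduct_nonsing_inv_mulVec_le (hPlb 0 le_rfl) (x 0)
  have hrate : qm * μ / qM ^ 2 ≤ μ / qM := by
    rw [sq, ← div_mul_div_comm]
    exact mul_le_of_le_one_left (by positivity) ((div_le_one hqM).2 hqmM)
  refine enormN_le_mul_of_dotProduct_le (by positivity) ?_
  calc x t ⬝ᵥ x t ≤ qM * (x 0 ⬝ᵥ (P 0)⁻¹ *ᵥ x 0 * Real.exp (-(μ / qM) * t)) :=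
        hWt.trans (mul_le_mul_of_nonneg_left hdecay hqM.le)
    _ ≤ qM * (x 0 ⬝ᵥ x 0 / qm * Real.exp (-(qm * μ / qM ^ 2) * t)) := by
      gcongr
      · exact div_nonneg (by simpa using dotProduct_star_self_nonneg (x 0)) hqm.le
      · rwa [le_div_iff₀' hqm]
    _ = _ := by
      rw [mul_pow, Real.sq_sqrt (by positivity), ← Real.exp_nat_mul]
      field_simp
      ring_nf

/-- Let `C` be constant, `Q`, `V` constant symmetric positive definite, `A` continuous
on `[0,∞)`.  Suppose `P` is differentiable, symmetric, satisfies the Riccati equation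
`P' = A P + P Aᵀ − P CᵀQC P + V`, and `q_m Iₙ ≤ P(t) ≤ q_M Iₙ` with `0 < q_m ≤ q_M`.
If `x' = (A − P CᵀQC) x`, then
`‖x(t)‖ ≤ √(q_M/q_m) e^{−λt} ‖x(0)‖` for all `t ≥ 0`, where
`λ = q_m λ_min(V)/(2 q_M²)`. -/
theorem stmt19 (n m : ℕ)
    (C : Matrix (Fin m) (Fin n) ℝ) (Q : Matrix (Fin m) (Fin m) ℝ)
    (V : Matrix (Fin n) (Fin n) ℝ) (hQ : Q.PosDef) (hV : V.PosDef)
    (A P : ℝ → Matrix (Fin n) (Fin n) ℝ)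
    (hAcont : ContinuousOn A (Set.Ici 0))
    (hPsymm : ∀ t ≥ (0:ℝ), (P t).IsSymm)
    (hP' : ∀ t ≥ (0:ℝ), ∀ i j : Fin n, HasDerivAt (fun s => P s i j)
      ((A t * P t + P t * (A t)ᵀ - P t * Cᵀ * Q * C * P t + V) i j) t)
    (qm qM : ℝ) (hqm : 0 < qm) (hqmM : qm ≤ qM)
    (hPlb : ∀ t ≥ (0:ℝ), (P t - qm • 1).PosSemidef)
    (hPub : ∀ t ≥ (0:ℝ), (qM • 1 - P t).PosSemidef)
    (x : ℝ → Fin n → ℝ)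
    (hx : ∀ t ≥ (0:ℝ), ∀ i : Fin n, HasDerivAt (fun s => x s i)
      ((A t - P t * Cᵀ * Q * C).mulVec (x t) i) t) :
    ∀ t ≥ (0:ℝ), enormN (x t) ≤
      Real.sqrt (qM / qm) *
        Real.exp (-(qm * (⨅ i, hV.1.eigenvalues i) / (2 * qM ^ 2)) * t) *
        enormN (x 0) :=
  stmt19_general n m C Q V hQ hV A P hP' qm qM hqm hqmM hPlb hPub x hx
end
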